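/- arXiv:1003.2588 — 2 statements merged into one kernel-verified Lean document; each statement's English description precedes it below -/
import Mathlib

section
/- Let n ≥ 1. A subset S ⊆ ℝ^{n+1} is T-shaped if and only if there exist hyperplanes H₁,…,H_n in ℝ^{n+1} in general position such that S ⊆ H₁ ∪ ⋯ ∪ H_n and for each i with 1 ≤ i ≤ n, the hyperplane H_i does not separate the set S \ (H₁ ∪ ⋯ ∪ H_{i−1}). -/
/-!
The last `n` coordinates of an invertible affine map are `n` affine functionals
`ℓᵢ x = vᵢ ⬝ᵥ x - cᵢ` with linearly independent linear parts, and conversely any such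
functionals are the last coordinates of an invertible affine map, since `n` independent
rows extend to an invertible matrix. Reading `T_n` backwards, a point lies in it iff some
coordinate vanishes and all coordinates before the first vanishing one are nonnegative.
For `x ∈ S`, with `Hᵢ = {ℓᵢ = 0}`, that says `S ⊆ ⋃ Hᵢ` and that `S \ (H₁ ∪ ⋯ ∪ Hᵢ₋₁)` lies
in `{ℓᵢ ≥ 0}`; the non-separation condition gives this after a sign change of each `ℓᵢ`.
-/

/-- The set `T_n ⊆ ℝⁿ`, with `T_0 = ∅` and `T_{n+1} = (ℝⁿ × {0}) ∪ (T_n × ℝ₊)`. -/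
def Tset : (n : ℕ) → Set (Fin n → ℝ)
  | 0 => ∅
  | n + 1 =>
      {x | x (Fin.last n) = 0 ∨
        ((fun i : Fin n => x i.castSucc) ∈ Tset n ∧ 0 ≤ x (Fin.last n))}

/-- `S ⊆ ℝ^{n+1}` is T-shaped if some invertible affine transformation maps it
into `ℝ × T_n`. -/
def IsTShaped (n : ℕ) (S : Set (Fin (n + 1) → ℝ)) : Prop :=
  ∃ f : (Fin (n + 1) → ℝ) ≃ᵃ[ℝ] (Fin (n + 1) → ℝ),
    ∀ x ∈ S, (fun i : Fin n => f x i.succ) ∈ Tset n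

open Matrix

theorem mem_Tset_iff {n : ℕ} {y : Fin n → ℝ} :
    y ∈ Tset n ↔ ∃ p, y p = 0 ∧ ∀ q, p < q → 0 ≤ y q := by
  induction n with
  | zero => simp [Tset]
  | succ n ih =>
    have not_last_lt (i : Fin (n + 1)) : ¬ Fin.last n < i := not_lt.2 (Fin.le_last i)
    simp only [Tset, Set.mem_ofPred_eq, ih, Fin.exists_fin_succ', Fin.forall_fin_succ',
      Fin.castSucc_lt_castSucc_iff, Fin.castSucc_lt_last, not_last_lt, true_imp_iff,
      false_imp_iff, implies_true, ← and_assoc, exists_and_right, and_true]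
    exact or_comm

theorem exists_eq_zero_forall_lt_nonneg_iff {ι α : Type*} [LinearOrder ι] [WellFoundedLT ι]
    [Zero α] [Preorder α] {y : ι → α} :
    (∃ i, y i = 0 ∧ ∀ j < i, 0 ≤ y j) ↔ (∃ i, y i = 0) ∧ ∀ i, (∀ j < i, y j ≠ 0) → 0 ≤ y i := by
  constructor
  · rintro ⟨i, hi, hlt⟩
    refine ⟨⟨i, hi⟩, fun k hk => ?_⟩
    rcases lt_trichotomy k i with hki | rfl | hik
    · exact hlt k hki
    · exact hi.ge
    · exact absurd hi (hk i hik)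
  · rintro ⟨⟨i, hi⟩, hnonneg⟩
    obtain ⟨i₀, hi₀, hmin⟩ := wellFounded_lt.has_min {i | y i = 0} ⟨i, hi⟩
    exact ⟨i₀, hi₀, fun j hj => hnonneg j fun k hk hk₀ => hmin k hk₀ (hk.trans hj)⟩

theorem rev_mem_Tset_iff {n : ℕ} {y : Fin n → ℝ} :
    (fun i => y i.rev) ∈ Tset n ↔ (∃ i, y i = 0) ∧ ∀ i, (∀ j < i, y j ≠ 0) → 0 ≤ y i := by
  rw [mem_Tset_iff, ← exists_eq_zero_forall_lt_nonneg_iff]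
  refine Fin.revPerm.exists_congr fun p => and_congr_right' (Fin.revPerm.forall_congr fun q => ?_)
  simp [Fin.rev_lt_rev]

theorem exists_units_mul_sub_nonneg {X K : Type*} [Field K] [LinearOrder K]
    [IsStrictOrderedRing K] {S : Set X} {p : X → Prop} {a : X → K} {b : K}
    (h : (∀ x ∈ S, p x → a x ≤ b) ∨ ∀ x ∈ S, p x → b ≤ a x) :
    ∃ ε : Kˣ, ∀ x ∈ S, p x → 0 ≤ ε * (a x - b) := by
  rcases h with h | h
  · exact ⟨-1, fun x hx hp => by simpa using h x hx hp⟩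
  · exact ⟨1, fun x hx hp => by simpa using h x hx hp⟩

section Affine

variable {K : Type*} [Field K] {m : Type*} [Fintype m] [DecidableEq m]

theorem AffineEquiv.apply_eq_toMatrix'_mulVec_add (f : (m → K) ≃ᵃ[K] (m → K)) (x : m → K) :
    f x = LinearMap.toMatrix' (f.linear : (m → K) →ₗ[K] m → K) *ᵥ x + f 0 := by
  rw [LinearMap.toMatrix'_mulVec]
  simpa using congrFun (AffineMap.decomp (f : (m → K) →ᵃ[K] m → K)) x

theorem AffineEquiv.isUnit_toMatrix'_linear (f : (m → K) ≃ᵃ[K] (m → K)) :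
    IsUnit (LinearMap.toMatrix' (f.linear : (m → K) →ₗ[K] m → K)) := by
  rw [← mulVec_injective_iff_isUnit]
  intro x y hxy
  simpa [LinearMap.toMatrix'_mulVec] using hxy

theorem Matrix.exists_affineEquiv_eq_mulVec_add {M : Matrix m m K} (hM : IsUnit M) (t : m → K) :
    ∃ f : (m → K) ≃ᵃ[K] (m → K), ∀ x, f x = M *ᵥ x + t :=
  ⟨(M.toLinearEquiv' hM.invertible).toAffineEquiv.trans (AffineEquiv.constVAdd K _ t),
    fun x => by simp [toLinearEquiv', add_comm]⟩

theorem exists_isUnit_matrix_of_linearIndependent {n : ℕ} {v : Fin n → Fin (n + 1) → K}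
    (hv : LinearIndependent K v) :
    ∃ M : Matrix (Fin (n + 1)) (Fin (n + 1)) K, IsUnit M ∧ ∀ i, M i.succ = v i := by
  obtain ⟨w, hw⟩ := exists_linearIndependent_cons_of_lt_finrank hv (by simp)
  exact ⟨Matrix.of (Fin.cons w v), linearIndependent_rows_iff_isUnit.1 hw, fun _ => rfl⟩

theorem exists_affineEquiv_succ_iff_exists_linearIndependent {n : ℕ} {ι : Type*} (e : ι ≃ Fin n)
    (P : (ι → K) → Prop) (S : Set (Fin (n + 1) → K)) :
    (∃ f : (Fin (n + 1) → K) ≃ᵃ[K] (Fin (n + 1) → K), ∀ x ∈ S, P fun i => f x (e i).succ) ↔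
      ∃ (v : ι → Fin (n + 1) → K) (c : ι → K),
        LinearIndependent K v ∧ ∀ x ∈ S, P fun i => v i ⬝ᵥ x - c i := by
  constructor
  · rintro ⟨f, hf⟩
    set M := LinearMap.toMatrix' (f.linear : (Fin (n + 1) → K) →ₗ[K] Fin (n + 1) → K)
    have hrows : LinearIndependent K fun i => M (e i).succ :=
      (linearIndependent_rows_iff_isUnit.2 f.isUnit_toMatrix'_linear).comp _
        ((Fin.succ_injective n).comp e.injective)
    refine ⟨fun i => M (e i).succ, fun i => -f 0 (e i).succ, hrows, fun x hx => ?_⟩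
    convert hf x hx using 2 with i
    rw [f.apply_eq_toMatrix'_mulVec_add x, sub_neg_eq_add]
    rfl
  · rintro ⟨v, c, hv, hS⟩
    obtain ⟨M, hM, hMv⟩ :=
      exists_isUnit_matrix_of_linearIndependent (hv.comp e.symm e.symm.injective)
    obtain ⟨f, hf⟩ := exists_affineEquiv_eq_mulVec_add hM (Fin.cons 0 fun k => -c (e.symm k))
    refine ⟨f, fun x hx => ?_⟩
    convert hS x hx using 2 with i
    simp [hf, mulVec, hMv, sub_eq_add_neg]

end Affine

theorem isTShaped_iff_exists_linearIndependent {n : ℕ} {S : Set (Fin (n + 1) → ℝ)} :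
    IsTShaped n S ↔ ∃ (v : Fin n → Fin (n + 1) → ℝ) (c : Fin n → ℝ),
      LinearIndependent ℝ v ∧ ∀ x ∈ S, (∃ i, v i ⬝ᵥ x - c i = 0) ∧
        ∀ i, (∀ j < i, v j ⬝ᵥ x - c j ≠ 0) → 0 ≤ v i ⬝ᵥ x - c i := by
  simp_rw [← rev_mem_Tset_iff]
  rw [IsTShaped, ← exists_affineEquiv_succ_iff_exists_linearIndependent Fin.revPerm
    (fun y => (fun i => y i.rev) ∈ Tset n)]
  simp [Fin.rev_rev]

theorem isTShaped_iff_hyperplanes_general (n : ℕ) (S : Set (Fin (n + 1) → ℝ)) :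
    IsTShaped n S ↔
      ∃ (v : Fin n → (Fin (n + 1) → ℝ)) (c : Fin n → ℝ),
        LinearIndependent ℝ v ∧
        (∀ x ∈ S, ∃ i, (∑ j, v i j * x j) = c i) ∧
        (∀ i : Fin n,
          (∀ x ∈ S, (∀ j, j < i → (∑ l, v j l * x l) ≠ c j) →
            (∑ l, v i l * x l) ≤ c i) ∨
          (∀ x ∈ S, (∀ j, j < i → (∑ l, v j l * x l) ≠ c j) →
            c i ≤ (∑ l, v i l * x l))) := by
  rw [isTShaped_iff_exists_linearIndependent]
  constructor
  · rintro ⟨v, c, hv, hS⟩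
    refine ⟨v, c, hv, fun x hx => ?_, fun i => Or.inr fun x hx hne => ?_⟩
    · obtain ⟨i, hi⟩ := (hS x hx).1
      exact ⟨i, sub_eq_zero.1 hi⟩
    · exact sub_nonneg.1 ((hS x hx).2 i fun j hj => sub_ne_zero.2 (hne j hj))
  · rintro ⟨v, c, hv, hcover, hside⟩
    choose ε hε using fun i => exists_units_mul_sub_nonneg (hside i)
    refine ⟨fun i => ε i • v i, fun i => ε i * c i, hv.units_smul ε, fun x hx => ?_⟩
    have hscale (i : Fin n) : (ε i • v i) ⬝ᵥ x - ε i * c i = ε i * (v i ⬝ᵥ x - c i) := by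
      simp [Units.smul_def, smul_dotProduct, mul_sub]
    simp only [hscale, ne_eq, Units.mul_right_eq_zero, sub_eq_zero]
    obtain ⟨i, hi⟩ := hcover x hx
    exact ⟨⟨i, hi⟩, fun i hne => hε i x hx hne⟩

/-- Characterization of T-shaped sets: `S ⊆ ℝ^{n+1}` (with `n ≥ 1`) is T-shaped
iff there are hyperplanes `H₁, …, H_n` (given by normals `v i ≠ 0`, in general
position, i.e. with linearly independent normals, which makes them pairwise
distinct) and constants `c i`, such that `S ⊆ H₁ ∪ ⋯ ∪ H_n` and each `H i` does
not separate `S \ (H₁ ∪ ⋯ ∪ H_{i-1})` (that set lies in one of the two closed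
half-spaces bounded by `H i`). -/
theorem isTShaped_iff_hyperplanes (n : ℕ) (hn : 1 ≤ n)
    (S : Set (Fin (n + 1) → ℝ)) :
    IsTShaped n S ↔
      ∃ (v : Fin n → (Fin (n + 1) → ℝ)) (c : Fin n → ℝ),
        LinearIndependent ℝ v ∧
        (∀ x ∈ S, ∃ i, (∑ j, v i j * x j) = c i) ∧
        (∀ i : Fin n,
          (∀ x ∈ S, (∀ j, j < i → (∑ l, v j l * x l) ≠ c j) →
            (∑ l, v i l * x l) ≤ c i) ∨
          (∀ x ∈ S, (∀ j, j < i → (∑ l, v j l * x l) ≠ c j) →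
            c i ≤ (∑ l, v i l * x l))) :=
  isTShaped_iff_hyperplanes_general n S
end

section
/- Let G be an abelian topological group, k ≥ 2, and C ⊆ G a k-centerpole subset of G. Then C is k-centerpole in the subgroup H = ⟨C⟩ + G[2], where ⟨C⟩ is the subgroup generated by C and G[2] = {x ∈ G : 2x = 0}. -/
/-- A subset `B` of a topological additive group is totally bounded if every
neighborhood `U` of `0` admits finitely many translates covering `B`. -/
def IsTotBounded {G : Type*} [AddGroup G] [TopologicalSpace G] (B : Set G) : Prop :=
  ∀ U ∈ nhds (0 : G), ∃ F : Set G, F.Finite ∧ B ⊆ ⋃ x ∈ F, (fun u => x + u) '' U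

/-- `C ⊆ G` is `k`-centerpole: every `k`-coloring of `G` admits an unbounded
monochromatic subset `S` symmetric with respect to some `c ∈ C`, i.e.
`S = 2c - S`. -/
def IsCenterpole {G : Type*} [AddCommGroup G] [TopologicalSpace G]
    (k : ℕ) (C : Set G) : Prop :=
  ∀ χ : G → Fin k, ∃ c ∈ C, ∃ S : Set G,
    (∃ i : Fin k, ∀ x ∈ S, χ x = i) ∧ ¬ IsTotBounded S ∧
    S = (fun x => c + c - x) '' S

/-- The Boolean subgroup `G[2] = {x ∈ G : 2x = 0}`. -/
def boolSubgroup (G : Type*) [AddCommGroup G] : AddSubgroup G where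
  carrier := {x | x + x = 0}
  zero_mem' := by simp
  add_mem' := by
    intro a b ha hb
    simp only [Set.mem_setOf_eq] at *
    rw [show a + b + (a + b) = (a + a) + (b + b) by abel, ha, hb, add_zero]
  neg_mem' := by
    intro a ha
    simp only [Set.mem_setOf_eq] at *
    rw [← neg_add, ha, neg_zero]

/-!
Colour `H = ⟨C⟩ + G[2]` as prescribed and colour `G \ H` through the quotient by `N = 2⟨C⟩`,
choosing a colouring of `G ⧸ N` that separates every class `q ≠ -q` from `-q`. For `c ∈ C`
the reflection `x ↦ 2c - x` induces `q ↦ -q` on `G ⧸ N`, and for `x ∉ H` the class of `x` is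
not of order two, since `2x ∈ 2⟨C⟩` forces `x ∈ ⟨C⟩ + G[2]`. Hence no pair `x, 2c - x` outside
`H` is monochromatic, so every monochromatic set symmetric about a point of `C` lies in `H`.
-/

open Function

theorem Function.Involutive.exists_coloring_ne {α β : Type*} [Nontrivial β] {σ : α → α}
    (hσ : Involutive σ) : ∃ g : α → β, ∀ a, σ a ≠ a → g (σ a) ≠ g a := by
  classical
  obtain ⟨b₀, b₁, hb⟩ := exists_pair_ne β
  refine ⟨fun a => if WellOrderingRel a (σ a) then b₀ else b₁, fun a ha => ?_⟩
  simp only [hσ a]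
  rcases trichotomous_of WellOrderingRel a (σ a) with h | h | h
  · simp [h, asymm h, hb.symm]
  · exact absurd h.symm ha
  · simp [h, asymm h, hb]

theorem Function.Involutive.eq_image_self_iff_mapsTo {α : Type*} {f : α → α}
    (hf : Involutive f) {S : Set α} : S = f '' S ↔ Set.MapsTo f S S := by
  rw [hf.image_eq_preimage_symm]
  refine ⟨fun h x hx => ?_, fun h => Set.Subset.antisymm h fun x hx => ?_⟩
  · rw [h] at hx
    exact hx
  · simpa only [hf x] using h hx

section IsTotBounded

variable {G G' : Type*} [AddGroup G] [TopologicalSpace G] [AddGroup G'] [TopologicalSpace G']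

theorem IsTotBounded.image {B : Set G} (hB : IsTotBounded B) {f : G →+ G'}
    (hf : Continuous f) : IsTotBounded (f '' B) := by
  intro U hU
  have hU' : f ⁻¹' U ∈ nhds (0 : G) := hf.continuousAt.preimage_mem_nhds (by simpa using hU)
  obtain ⟨F, hF, hBF⟩ := hB _ hU'
  refine ⟨f '' F, hF.image f, ?_⟩
  rintro _ ⟨b, hb, rfl⟩
  obtain ⟨x, hx, u, hu, rfl⟩ := by simpa only [Set.mem_iUnion, Set.mem_image] using hBF hb
  simp only [Set.mem_iUnion, Set.mem_image]
  exact ⟨f x, ⟨x, hx, rfl⟩, f u, hu, (map_add f x u).symm⟩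

theorem not_isTotBounded_preimage_subtype {H : AddSubgroup G} {S : Set G}
    (hSH : S ⊆ H) (hS : ¬IsTotBounded S) : ¬IsTotBounded (Subtype.val ⁻¹' S : Set H) := by
  intro hb
  have hrange : S ⊆ Set.range (Subtype.val : H → G) := by rwa [Subtype.range_coe_subtype]
  have := hb.image (f := H.subtype) continuous_subtype_val
  rw [AddSubgroup.coe_subtype, Set.image_preimage_eq_of_subset hrange] at this
  exact hS this

end IsTotBounded

section Reflection

variable {G : Type*} [AddCommGroup G]

theorem reflect_involutive (c : G) : Involutive fun x : G => c + c - x :=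
  fun _ => sub_sub_cancel _ _

theorem Set.MapsTo.preimage_reflect {G' : Type*} [AddCommGroup G'] (f : G' →+ G) {c : G'}
    {S : Set G} (hS : MapsTo (fun x => f c + f c - x) S S) :
    MapsTo (fun x => c + c - x) (f ⁻¹' S) (f ⁻¹' S) := by
  intro x hx
  simpa only [Set.mem_preimage, map_sub, map_add] using hS hx

theorem subset_of_reflect_ne {β : Type*} {H S : Set G} {χ : G → β} {c : G} {i : β}
    (hχ : ∀ x ∉ H, χ (c + c - x) ≠ χ x) (hS : ∀ x ∈ S, χ x = i)
    (hsym : Set.MapsTo (fun x => c + c - x) S S) : S ⊆ H := by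
  intro x hx
  by_contra hxH
  exact hχ x hxH ((hS _ (hsym hx)).trans (hS x hx).symm)

end Reflection

section Doubling

variable {G : Type*} [AddCommGroup G] {K : AddSubgroup G}

theorem mem_sup_boolSubgroup_of_add_self_mem {x : G}
    (hx : x + x ∈ K.map (nsmulAddMonoidHom 2)) :
    x ∈ K ⊔ boolSubgroup G := by
  obtain ⟨a, ha, hax⟩ := hx
  have hxa : x - a ∈ boolSubgroup G := by
    change x - a + (x - a) = 0
    rw [show x - a + (x - a) = x + x - 2 • a by abel, ← hax]
    exact sub_self _
  simpa using add_mem (AddSubgroup.mem_sup_left ha) (AddSubgroup.mem_sup_right hxa)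

theorem neg_mk_ne_mk_of_notMem_sup {x : G} (hx : x ∉ K ⊔ boolSubgroup G) :
    -(x : G ⧸ K.map (nsmulAddMonoidHom 2)) ≠ x := by
  intro h
  apply hx
  apply mem_sup_boolSubgroup_of_add_self_mem
  rw [← QuotientAddGroup.eq_zero_iff, QuotientAddGroup.mk_add, ← neg_eq_iff_add_eq_zero]
  exact h

theorem mk_reflect_eq_neg {c : G} (hc : c ∈ K) (x : G) :
    ((c + c - x : G) : G ⧸ K.map (nsmulAddMonoidHom 2)) =
      -(x : G ⧸ K.map (nsmulAddMonoidHom 2)) := by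
  have h2c : ((c + c : G) : G ⧸ K.map (nsmulAddMonoidHom 2)) = 0 :=
    (QuotientAddGroup.eq_zero_iff _).mpr ⟨c, hc, two_nsmul c⟩
  rw [QuotientAddGroup.mk_sub, h2c, zero_sub]

end Doubling

/-- If `C` is `k`-centerpole (with `k ≥ 2`) in an abelian topological group
`G`, then `C` is `k`-centerpole in the subgroup `H = ⟨C⟩ + G[2]` (with its
subspace topology). -/
theorem centerpole_in_generated_subgroup {G : Type*} [AddCommGroup G]
    [TopologicalSpace G] [IsTopologicalAddGroup G] (k : ℕ) (hk : 2 ≤ k)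
    (C : Set G) (hC : IsCenterpole k C) :
    IsCenterpole k
      ((Subtype.val ⁻¹' C) :
        Set ((AddSubgroup.closure C ⊔ boolSubgroup G : AddSubgroup G))) := by
  set K := AddSubgroup.closure C
  set H := K ⊔ boolSubgroup G
  set N := K.map (nsmulAddMonoidHom 2)
  have : Nontrivial (Fin k) := Fin.nontrivial_iff_two_le.mpr hk
  intro χ
  obtain ⟨g, hg⟩ := (neg_involutive (G := G ⧸ N)).exists_coloring_ne (β := Fin k)
  set χ' : G → Fin k := extend Subtype.val χ (g ∘ QuotientAddGroup.mk)
  obtain ⟨c, hcC, S, ⟨i, hSi⟩, hSunb, hSsym⟩ := hC χ'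
  have hcH : c ∈ H := AddSubgroup.mem_sup_left (AddSubgroup.subset_closure hcC)
  have hSc := (reflect_involutive c).eq_image_self_iff_mapsTo.mp hSsym
  have hreflect : ∀ x ∉ H, χ' (c + c - x) ≠ χ' x := by
    intro x hxH
    have hyH : c + c - x ∉ H := fun hy => hxH (by simpa using sub_mem (add_mem hcH hcH) hy)
    have hχ' : ∀ y ∉ H, χ' y = g (y : G ⧸ N) :=
      fun y hy => extend_apply' _ _ _ fun ⟨a, ha⟩ => hy (ha ▸ a.2)
    rw [hχ' x hxH, hχ' _ hyH, mk_reflect_eq_neg (AddSubgroup.subset_closure hcC)]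
    exact hg _ (neg_mk_ne_mk_of_notMem_sup hxH)
  have hSH : S ⊆ H := subset_of_reflect_ne hreflect hSi hSc
  refine ⟨⟨c, hcH⟩, hcC, Subtype.val ⁻¹' S, ⟨i, fun x hx => ?_⟩,
    not_isTotBounded_preimage_subtype hSH hSunb,
    (reflect_involutive _).eq_image_self_iff_mapsTo.mpr (hSc.preimage_reflect H.subtype)⟩
  exact (Subtype.val_injective.extend_apply χ _ x).symm.trans (hSi x hx)
end
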